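/- arXiv:1603.06706 — 3 statements merged into one kernel-verified Lean document; each statement's English description precedes it below -/
import Mathlib

section
/- Let p be a prime, n ≥ 1, q = p^n, let F be a finite field with q² elements, and let E be a field extension of F with q⁴ elements. If (x, y, t) ∈ E³ is a nonzero vector with x^{q+1} + y^{q+1} + t^{q+1} = 0, then there exists λ ∈ E with λ ≠ 0 such that λx, λy, λt all lie in F. In other words, the Hermitian curve H_q has no points with coordinates in F_{q⁴} \ F_{q²}: every F_{q⁴}-rational point of H_q already lies in PG(2, F_{q²}). -/
/-!
Let `σ(z) = z ^ q`, so that `σ⁴ = 1` on `E` and `F` is the fixed field of `σ²`. For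
`P = (x, y, t)` the curve equation reads `P ⬝ σP = 0` for the bilinear dot product, and applying
`σ` repeatedly gives `σⁱP ⬝ σⁱ⁺¹P = 0` for all `i`. If `P` and `σ²P` were independent, then `σP`
and `σ³P` would both lie on the line orthogonal to them, so `σ³P ∥ σP` and, applying `σ` once
more, `P ∥ σ²P`: a contradiction. Hence `σ²P = μP`, and dividing `P` by a nonzero coordinate
gives a point fixed by `σ²`, i.e. one with coordinates in `F`.
-/

open Matrix

theorem RingHom.dotProduct_comp_comp_eq_zero {R ι : Type*} [CommSemiring R] [Fintype ι]
    (φ : R →+* R) {v : ι → R} (h : v ⬝ᵥ φ ∘ v = 0) : φ ∘ v ⬝ᵥ φ ∘ φ ∘ v = 0 := by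
  rw [← map_dotProduct, h, map_zero]

section CrossProduct

variable {K : Type*} [Field K]

theorem exists_smul_eq_of_cross_eq_zero {v w : Fin 3 → K} (hv : v ≠ 0) (h : v ⨯₃ w = 0) :
    ∃ a : K, a • v = w := by
  by_contra! hne
  exact crossProduct_ne_zero_iff_linearIndependent.mpr
    ((LinearIndependent.pair_iff' hv).mpr hne) h

theorem exists_smul_cross_eq_of_dotProduct_eq_zero {u v w : Fin 3 → K} (hvw : v ⨯₃ w ≠ 0)
    (hv : u ⬝ᵥ v = 0) (hw : u ⬝ᵥ w = 0) : ∃ a : K, a • v ⨯₃ w = u :=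
  exists_smul_eq_of_cross_eq_zero hvw <| by
    rw [cross_cross_eq_smul_sub_smul, dotProduct_comm, hv, dotProduct_comm, hw, zero_smul,
      zero_smul, sub_zero]

theorem cross_comp_comp_eq_zero (φ : K →+* K) (hφ : ∀ z, φ (φ (φ (φ z))) = z)
    {v : Fin 3 → K} (hv : v ≠ 0) (h : v ⬝ᵥ φ ∘ v = 0) : v ⨯₃ (φ ∘ φ ∘ v) = 0 := by
  set v₁ := φ ∘ v
  set v₂ := φ ∘ v₁
  set v₃ := φ ∘ v₂
  have h₁₂ : v₁ ⬝ᵥ v₂ = 0 := φ.dotProduct_comp_comp_eq_zero h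
  have h₂₃ : v₂ ⬝ᵥ v₃ = 0 := φ.dotProduct_comp_comp_eq_zero h₁₂
  have hv₃ : φ ∘ v₃ = v := funext fun i ↦ hφ (v i)
  have h₃₀ : v₃ ⬝ᵥ v = 0 := hv₃ ▸ φ.dotProduct_comp_comp_eq_zero h₂₃
  by_contra hc
  obtain ⟨a, ha⟩ := exists_smul_cross_eq_of_dotProduct_eq_zero hc
    (by rwa [dotProduct_comm]) h₁₂
  obtain ⟨b, hb⟩ := exists_smul_cross_eq_of_dotProduct_eq_zero hc h₃₀
    (by rwa [dotProduct_comm])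
  have ha0 : a ≠ 0 := by
    rintro rfl
    have hv₁ : v₁ = 0 := by simpa using ha.symm
    exact hv (funext fun i ↦ (map_eq_zero φ).mp (congrFun hv₁ i))
  have hv₂ : φ (b / a) • v₂ = v := by
    rw [← hv₃, ← WeierstrassCurve.Projective.comp_smul, ← hb, ← ha, smul_smul,
      div_mul_cancel₀ b ha0]
  exact hc (by rw [← hv₂, map_smul, LinearMap.smul_apply, cross_self, smul_zero])

theorem comp_inv_smul_eq_self_of_cross_eq_zero (φ : K →+* K) {v : Fin 3 → K} {i : Fin 3}
    (hi : v i ≠ 0) (h : v ⨯₃ φ ∘ v = 0) : φ ∘ ((v i)⁻¹ • v) = (v i)⁻¹ • v := by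
  obtain ⟨a, ha⟩ := exists_smul_eq_of_cross_eq_zero (fun h0 ↦ hi (congrFun h0 i)) h
  have hφ (j : Fin 3) : φ (v j) = a * v j := (congrFun ha j).symm
  have ha0 : a ≠ 0 := left_ne_zero_of_mul (hφ i ▸ (map_ne_zero φ).mpr hi)
  ext j
  simp only [Function.comp_apply, Pi.smul_apply, smul_eq_mul, map_mul, map_inv₀, hφ]
  field_simp

end CrossProduct

theorem mem_range_algebraMap_of_pow_card_eq {F E : Type*} [Field F] [Fintype F] [Field E]
    [Finite E] [Algebra F E] {x : E} (hx : x ^ Fintype.card F = x) :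
    x ∈ Set.range (algebraMap F E) := by
  rw [IsGalois.mem_range_algebraMap_iff_fixed]
  intro f
  obtain ⟨n, rfl⟩ := (FiniteField.bijective_frobeniusAlgEquivOfAlgebraic_pow F E).2 f
  rw [AlgEquiv.coe_pow, FiniteField.coe_frobeniusAlgEquivOfAlgebraic]
  exact Function.iterate_fixed hx _

theorem hermitian_curve_no_points_in_Fq4_minus_Fq2_general
    (p n q : ℕ) (hp : p.Prime) (hq : q = p ^ n)
    (F : Type) [Field F] [Fintype F] (hF : Fintype.card F = q ^ 2)
    (E : Type) [Field E] [Fintype E] [Algebra F E] (hE : Fintype.card E = q ^ 4)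
    (x y t : E) (hv : ¬(x = 0 ∧ y = 0 ∧ t = 0))
    (heq : x ^ (q + 1) + y ^ (q + 1) + t ^ (q + 1) = 0) :
    ∃ l : E, l ≠ 0 ∧ l * x ∈ Set.range (algebraMap F E) ∧
      l * y ∈ Set.range (algebraMap F E) ∧ l * t ∈ Set.range (algebraMap F E) := by
  have := Fact.mk hp
  have : CharP E p := charP_of_card_eq_prime_pow (f := n * 4) (by rw [hE, hq, pow_mul])
  set σ := iterateFrobenius E p n
  have hσ (z : E) : σ z = z ^ q := by rw [iterateFrobenius_def, hq]
  have hσ4 (z : E) : σ (σ (σ (σ z))) = z := by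
    simp only [hσ, ← pow_mul, show q * q * q * q = Fintype.card E by rw [hE]; ring,
      FiniteField.pow_card]
  set v : Fin 3 → E := ![x, y, t]
  have hv0 : v ≠ 0 := fun h0 ↦ hv ⟨congrFun h0 0, congrFun h0 1, congrFun h0 2⟩
  have horth : v ⬝ᵥ σ ∘ v = 0 := by
    simp only [v, vec3_dotProduct, Function.comp_apply, hσ]
    simpa [pow_succ'] using heq
  obtain ⟨i, hi⟩ := Function.ne_iff.mp hv0
  have hfix := comp_inv_smul_eq_self_of_cross_eq_zero (σ.comp σ) hi
    (cross_comp_comp_eq_zero σ hσ4 hv0 horth)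
  have hmem (j : Fin 3) : ((v i)⁻¹ • v) j ∈ Set.range (algebraMap F E) := by
    refine mem_range_algebraMap_of_pow_card_eq ?_
    conv_rhs => rw [← hfix]
    simp [hF, hσ, sq, pow_mul]
  exact ⟨(v i)⁻¹, inv_ne_zero hi, hmem 0, hmem 1, hmem 2⟩

/-- Let `q = p ^ n`, `F` be a finite field with `q²` elements, and `E` an
extension field of `F` with `q⁴` elements. Every `E`-rational point of the Hermitian curve
`x^(q+1) + y^(q+1) + t^(q+1) = 0` already lies in `PG(2, F)`: if `(x, y, t) ∈ E³` is a nonzero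
solution, then some nonzero scalar multiple `(λx, λy, λt)` has all coordinates in (the image
of) `F`. -/
theorem hermitian_curve_no_points_in_Fq4_minus_Fq2
    (p n q : ℕ) (hp : p.Prime) (hn : 1 ≤ n) (hq : q = p ^ n)
    (F : Type) [Field F] [Fintype F] (hF : Fintype.card F = q ^ 2)
    (E : Type) [Field E] [Fintype E] [Algebra F E] (hE : Fintype.card E = q ^ 4)
    (x y t : E) (hv : ¬(x = 0 ∧ y = 0 ∧ t = 0))
    (heq : x ^ (q + 1) + y ^ (q + 1) + t ^ (q + 1) = 0) :
    ∃ l : E, l ≠ 0 ∧ l * x ∈ Set.range (algebraMap F E) ∧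
      l * y ∈ Set.range (algebraMap F E) ∧ l * t ∈ Set.range (algebraMap F E) :=
  hermitian_curve_no_points_in_Fq4_minus_Fq2_general p n q hp hq F hF E hE x y t hv heq
end

section
/- Let p be a prime, n ≥ 1, q = p^n, and let F be a finite field with q² elements. The map sending τ_{1,b,c} to b is a surjective group homomorphism from the group S = { τ_{1,b,c} : b, c ∈ F, b^{q+1} = c^q + c } (under matrix multiplication) onto the additive group of F, and its kernel is { τ_{1,0,c} : c ∈ F, c^q + c = 0 }, a subgroup of order q. -/
/-!
Multiplying out gives `τ_{1,b,c} τ_{1,b',c'} = τ_{1,b+b',c+c'+b^q b'}`, so reading off `b` is additive,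
and the condition `b^{q+1} = c^q + c` is preserved because `x ↦ x^q` is an additive involution of
`F = 𝔽_{q²}`. Surjectivity and the kernel both come down to the trace `T c = c^q + c`: its kernel
and its image (contained in the fixed points `y^q = y`) are root sets of polynomials of degree `q`,
while their orders multiply to `|F| = q²`; so `|ker T| = q` and `T` maps onto the fixed points,
among which is the norm `b^{q+1}`.
-/

/-- The matrix `τ_{1,b,c}` with rows `(1, b^q, c)`, `(0, 1, b)`, `(0, 0, 1)`. -/
def tau {F : Type} [Field F] (q : ℕ) (b c : F) : Matrix (Fin 3) (Fin 3) F :=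
  !![1, b ^ q, c; 0, 1, b; 0, 0, 1]

open Polynomial

section RootCounting

variable {F : Type*} [Field F]

lemma Polynomial.ncard_le_natDegree_of_forall_isRoot {P : F[X]} (hP : P ≠ 0) {s : Set F}
    (hs : ∀ x ∈ s, P.IsRoot x) : s.ncard ≤ P.natDegree :=
  (Set.ncard_le_ncard (fun x hx => mem_rootSet.2 ⟨hP, by simpa using hs x hx⟩)).trans
    (ncard_rootSet_le P F)

lemma Polynomial.natDegree_X_pow_add_X {q : ℕ} (hq : 2 ≤ q) : (X ^ q + X : F[X]).natDegree = q := by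
  rw [natDegree_add_eq_left_of_natDegree_lt] <;> simp only [natDegree_X_pow, natDegree_X]
  omega

lemma ncard_setOf_pow_add_self_eq_zero_le {q : ℕ} (hq : 2 ≤ q) :
    {c : F | c ^ q + c = 0}.ncard ≤ q := by
  have hP : (X ^ q + X : F[X]) ≠ 0 := ne_zero_of_natDegree_gt (n := 0) (by
    rw [natDegree_X_pow_add_X hq]; omega)
  simpa [natDegree_X_pow_add_X hq] using
    ncard_le_natDegree_of_forall_isRoot hP (s := {c : F | c ^ q + c = 0}) (by simp)

lemma ncard_setOf_pow_eq_self_le {q : ℕ} (hq : 2 ≤ q) : {y : F | y ^ q = y}.ncard ≤ q := by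
  simpa [FiniteField.X_pow_card_sub_X_natDegree_eq F hq, sub_eq_zero] using
    ncard_le_natDegree_of_forall_isRoot (FiniteField.X_pow_card_sub_X_ne_zero F hq)
      (s := {y : F | y ^ q = y}) (by simp [sub_eq_zero])

end RootCounting

lemma AddMonoidHom.card_ker_eq_and_card_range_eq {G H : Type*} [AddGroup G] [AddGroup H]
    [Finite G] (f : G →+ H) {a b : ℕ} (hG : Nat.card G = a * b) (hker : Nat.card f.ker ≤ a)
    (hrange : Nat.card f.range ≤ b) : Nat.card f.ker = a ∧ Nat.card f.range = b := by
  have hprod : Nat.card f.ker * Nat.card f.range = a * b := by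
    rw [← AddSubgroup.index_ker, f.ker.card_mul_index, hG]
  have hab : 0 < a * b := hG ▸ Nat.card_pos
  have ha : 0 < a := Nat.pos_of_mul_pos_right hab
  have hb : 0 < b := Nat.pos_of_mul_pos_left hab
  constructor <;> nlinarith

section FiniteField

variable {F : Type*} [Field F] [Fintype F] {q : ℕ}

lemma two_le_of_card_eq_sq (hF : Fintype.card F = q ^ 2) : 2 ≤ q := by
  have := hF ▸ Fintype.one_lt_card (α := F)
  by_contra! h
  interval_cases q <;> simp at this

lemma pow_pow_of_card_eq_sq (hF : Fintype.card F = q ^ 2) (x : F) : (x ^ q) ^ q = x := by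
  rw [← pow_mul, ← sq, ← hF, FiniteField.pow_card]

end FiniteField

section Trace

variable (F : Type*) [Field F] (p n : ℕ) [ExpChar F p]

/-- The trace `c ↦ c ^ q + c` of `𝔽_{q²} / 𝔽_q`, where `q = p ^ n`. -/
def frobTrace : F →+ F :=
  (iterateFrobenius F p n).toAddMonoidHom + AddMonoidHom.id F

variable {F p n}

lemma frobTrace_apply (c : F) : frobTrace F p n c = c ^ p ^ n + c := rfl

variable [Fintype F]

lemma frobTrace_pow (hF : Fintype.card F = (p ^ n) ^ 2) (c : F) :
    frobTrace F p n c ^ p ^ n = frobTrace F p n c := by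
  rw [frobTrace_apply, add_pow_expChar_pow, pow_pow_of_card_eq_sq hF, add_comm]

lemma card_ker_frobTrace_and_range_frobTrace (hF : Fintype.card F = (p ^ n) ^ 2) :
    Nat.card (frobTrace F p n).ker = p ^ n ∧
      ((frobTrace F p n).range : Set F) = {y | y ^ p ^ n = y} := by
  have hq := two_le_of_card_eq_sq hF
  have hrange : ((frobTrace F p n).range : Set F) ⊆ {y | y ^ p ^ n = y} := by
    rintro _ ⟨c, rfl⟩
    exact frobTrace_pow hF c
  obtain ⟨hker, hrange_card⟩ := (frobTrace F p n).card_ker_eq_and_card_range_eq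
    (a := p ^ n) (b := p ^ n) (by rw [Nat.card_eq_fintype_card, hF, sq])
    (by rw [← SetLike.coe_sort_coe, Nat.card_coe_set_eq]
        exact ncard_setOf_pow_add_self_eq_zero_le hq)
    (by rw [← SetLike.coe_sort_coe, Nat.card_coe_set_eq]
        exact (Set.ncard_le_ncard hrange).trans (ncard_setOf_pow_eq_self_le hq))
  refine ⟨hker, Set.eq_of_subset_of_ncard_le hrange ?_⟩
  calc _ ≤ p ^ n := ncard_setOf_pow_eq_self_le hq
    _ = _ := by rw [← hrange_card, ← SetLike.coe_sort_coe, Nat.card_coe_set_eq]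

end Trace

section Tau

variable {F : Type} [Field F]

@[simp] lemma tau_apply_zero_two (q : ℕ) (b c : F) : tau q b c 0 2 = c := rfl

lemma tau_injective_right (q : ℕ) (b : F) : Function.Injective (tau q b) :=
  fun c c' h => by simpa using congrFun (congrFun h 0) 2

lemma tau_mul_tau (p n : ℕ) [ExpChar F p] (b c b' c' : F) :
    tau (p ^ n) b c * tau (p ^ n) b' c' =
      tau (p ^ n) (b + b') (c + c' + b ^ p ^ n * b') := by
  rw [tau, tau, tau, Matrix.mul_fin_three, add_pow_expChar_pow]
  ring_nf

end Tau

section Hermitian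

variable {F : Type} [Field F] [Fintype F] {p n : ℕ} [ExpChar F p]

lemma add_pow_succ_eq_of_pow_succ_eq (hF : Fintype.card F = (p ^ n) ^ 2) {b c b' c' : F}
    (h : b ^ (p ^ n + 1) = c ^ p ^ n + c) (h' : b' ^ (p ^ n + 1) = c' ^ p ^ n + c') :
    (b + b') ^ (p ^ n + 1) =
      (c + c' + b ^ p ^ n * b') ^ p ^ n + (c + c' + b ^ p ^ n * b') := by
  rw [pow_succ] at h h' ⊢
  rw [add_pow_expChar_pow, add_pow_expChar_pow, add_pow_expChar_pow, mul_pow,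
    pow_pow_of_card_eq_sq hF]
  linear_combination h + h'

lemma exists_pow_add_self_eq_pow_succ (hF : Fintype.card F = (p ^ n) ^ 2) (b : F) :
    ∃ c : F, c ^ p ^ n + c = b ^ (p ^ n + 1) := by
  have hfixed : (b ^ (p ^ n + 1)) ^ p ^ n = b ^ (p ^ n + 1) := by
    rw [pow_succ, mul_pow, pow_pow_of_card_eq_sq hF, mul_comm]
  obtain ⟨c, hc⟩ : b ^ (p ^ n + 1) ∈ ((frobTrace F p n).range : Set F) := by
    rw [(card_ker_frobTrace_and_range_frobTrace hF).2]
    exact hfixed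
  exact ⟨c, hc⟩

end Hermitian

theorem tau_entry_map_is_surjective_hom_with_kernel_of_order_q_general
    (p n q : ℕ) (hp : p.Prime) (hq : q = p ^ n)
    (F : Type) [Field F] [Fintype F] (hF : Fintype.card F = q ^ 2) :
    (∀ A ∈ {A : Matrix (Fin 3) (Fin 3) F | ∃ b c : F, b ^ (q + 1) = c ^ q + c ∧ A = tau q b c},
     ∀ B ∈ {A : Matrix (Fin 3) (Fin 3) F | ∃ b c : F, b ^ (q + 1) = c ^ q + c ∧ A = tau q b c},
      (A * B) ∈
        {A : Matrix (Fin 3) (Fin 3) F | ∃ b c : F, b ^ (q + 1) = c ^ q + c ∧ A = tau q b c} ∧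
      (A * B) 1 2 = A 1 2 + B 1 2) ∧
    (∀ b : F, ∃ A ∈
        {A : Matrix (Fin 3) (Fin 3) F | ∃ b c : F, b ^ (q + 1) = c ^ q + c ∧ A = tau q b c},
      A 1 2 = b) ∧
    ({A : Matrix (Fin 3) (Fin 3) F |
        (∃ b c : F, b ^ (q + 1) = c ^ q + c ∧ A = tau q b c) ∧ A 1 2 = 0} =
      {A : Matrix (Fin 3) (Fin 3) F | ∃ c : F, c ^ q + c = 0 ∧ A = tau q 0 c}) ∧
    Nat.card {A : Matrix (Fin 3) (Fin 3) F //
        (∃ b c : F, b ^ (q + 1) = c ^ q + c ∧ A = tau q b c) ∧ A 1 2 = 0} = q := by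
  subst hq
  have : Fact p.Prime := ⟨hp⟩
  have : CharP F p := charP_of_card_eq_prime_pow (f := n * 2) (by rw [hF, pow_mul])
  have hker : {A : Matrix (Fin 3) (Fin 3) F |
      (∃ b c : F, b ^ (p ^ n + 1) = c ^ p ^ n + c ∧ A = tau (p ^ n) b c) ∧ A 1 2 = 0} =
      tau (p ^ n) 0 '' {c : F | c ^ p ^ n + c = 0} := by
    ext A
    constructor
    · rintro ⟨⟨b, c, hbc, rfl⟩, rfl⟩
      exact ⟨c, by simpa [eq_comm] using hbc, rfl⟩
    · rintro ⟨c, hc, rfl⟩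
      exact ⟨⟨0, c, by simpa [eq_comm] using hc, rfl⟩, rfl⟩
  refine ⟨?_, fun b => ?_, ?_, ?_⟩
  · rintro _ ⟨b, c, hbc, rfl⟩ _ ⟨b', c', hbc', rfl⟩
    rw [tau_mul_tau]
    exact ⟨⟨_, _, add_pow_succ_eq_of_pow_succ_eq hF hbc hbc', rfl⟩, rfl⟩
  · obtain ⟨c, hc⟩ := exists_pow_add_self_eq_pow_succ hF b
    exact ⟨tau (p ^ n) b c, ⟨b, c, hc.symm, rfl⟩, rfl⟩
  · rw [hker]
    ext A
    simp only [Set.mem_image, Set.mem_ofPred_eq, eq_comm (a := A)]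
  · change Nat.card ↥{A | _} = _
    rw [hker, Nat.card_image_of_injective (tau_injective_right _ _)]
    exact (card_ker_frobTrace_and_range_frobTrace hF).1

/-- Let `q = p ^ n` and `F` be a finite field with `q²` elements. On the group
`S = { τ_{1,b,c} : b, c ∈ F, b^(q+1) = c^q + c }` the map `τ_{1,b,c} ↦ b` (reading off the
`(1,2)` entry) is a surjective group homomorphism onto the additive group of `F`, whose kernel
is `{ τ_{1,0,c} : c ∈ F, c^q + c = 0 }`, a subgroup of order `q`. -/
theorem tau_entry_map_is_surjective_hom_with_kernel_of_order_q
    (p n q : ℕ) (hp : p.Prime) (hn : 1 ≤ n) (hq : q = p ^ n)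
    (F : Type) [Field F] [Fintype F] (hF : Fintype.card F = q ^ 2) :
    (∀ A ∈ {A : Matrix (Fin 3) (Fin 3) F | ∃ b c : F, b ^ (q + 1) = c ^ q + c ∧ A = tau q b c},
     ∀ B ∈ {A : Matrix (Fin 3) (Fin 3) F | ∃ b c : F, b ^ (q + 1) = c ^ q + c ∧ A = tau q b c},
      (A * B) ∈
        {A : Matrix (Fin 3) (Fin 3) F | ∃ b c : F, b ^ (q + 1) = c ^ q + c ∧ A = tau q b c} ∧
      (A * B) 1 2 = A 1 2 + B 1 2) ∧
    (∀ b : F, ∃ A ∈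
        {A : Matrix (Fin 3) (Fin 3) F | ∃ b c : F, b ^ (q + 1) = c ^ q + c ∧ A = tau q b c},
      A 1 2 = b) ∧
    ({A : Matrix (Fin 3) (Fin 3) F |
        (∃ b c : F, b ^ (q + 1) = c ^ q + c ∧ A = tau q b c) ∧ A 1 2 = 0} =
      {A : Matrix (Fin 3) (Fin 3) F | ∃ c : F, c ^ q + c = 0 ∧ A = tau q 0 c}) ∧
    Nat.card {A : Matrix (Fin 3) (Fin 3) F //
        (∃ b c : F, b ^ (q + 1) = c ^ q + c ∧ A = tau q b c) ∧ A 1 2 = 0} = q :=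
  tau_entry_map_is_surjective_hom_with_kernel_of_order_q_general p n q hp hq F hF
end

section
/- Let p be a prime, n ≥ 1, q = p^n, let F be a finite field with q² elements, and let E be any field extension of F. For every nontrivial element τ = τ_{1,b,c} of the group S, the only point of PG(2,E) that is fixed by τ (i.e. whose representative vectors v ∈ E³ satisfy τ·v = λv for some scalar λ) and whose coordinates (x, y, t) satisfy y^{q+1} = x^q t + x t^q, is the point [1 : 0 : 0]. In other words, every nontrivial element of S fixes exactly one point of the Hermitian curve in its norm-trace model. -/
section Tau

variable {F E : Type} [Field F] [Field E] {q : ℕ}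

theorem tau_map (f : F →+* E) (b c : F) : (tau q b c).map f = tau q (f b) (f c) := by
  ext i j
  fin_cases i <;> fin_cases j <;> simp [tau]

theorem tau_mulVec (b c : E) (v : Fin 3 → E) :
    (tau q b c).mulVec v = ![v 0 + b ^ q * v 1 + c * v 2, v 1 + b * v 2, v 2] := by
  funext i
  fin_cases i <;> simp [tau, Matrix.mulVec, dotProduct, Fin.sum_univ_three]

theorem tau_mulVec_of_eq_zero {b c : E} {v : Fin 3 → E} (h1 : v 1 = 0) (h2 : v 2 = 0) :
    (tau q b c).mulVec v = v := by
  funext i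
  fin_cases i <;> simp [tau_mulVec, h1, h2]

theorem eq_zero_of_tau_mulVec_eq_smul (hq : q ≠ 0) {b c : E} (hbc : ¬(b = 0 ∧ c = 0))
    {v : Fin 3 → E} {l : E} (hl : (tau q b c).mulVec v = l • v) : v 2 = 0 := by
  by_contra hv2
  have h0 := congrFun hl 0
  have h1 := congrFun hl 1
  have h2 := congrFun hl 2
  simp only [tau_mulVec, Matrix.cons_val, Pi.smul_apply, smul_eq_mul] at h0 h1 h2
  have hl1 : l = 1 := by
    have : (l - 1) * v 2 = 0 := by linear_combination -h2
    exact sub_eq_zero.mp ((mul_eq_zero.mp this).resolve_right hv2)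
  subst hl1
  have hb : b = 0 := by
    have : b * v 2 = 0 := by linear_combination h1
    exact (mul_eq_zero.mp this).resolve_right hv2
  have hc : c = 0 := by
    rw [hb, zero_pow hq] at h0
    have : c * v 2 = 0 := by linear_combination h0
    exact (mul_eq_zero.mp this).resolve_right hv2
  exact hbc ⟨hb, hc⟩

end Tau

theorem normTrace_eq_iff_of_eq_zero {E : Type} [Field E] {q : ℕ} (hq : q ≠ 0)
    {v : Fin 3 → E} (h2 : v 2 = 0) :
    v 1 ^ (q + 1) = v 0 ^ q * v 2 + v 0 * v 2 ^ q ↔ v 1 = 0 := by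
  rw [h2, zero_pow hq, mul_zero, mul_zero, add_zero]
  exact pow_eq_zero_iff (Nat.succ_ne_zero q)

theorem tau_fixes_exactly_one_point_of_curve_general
    (p n q : ℕ) (hp : p.Prime) (hq : q = p ^ n)
    (F : Type) [Field F]
    (E : Type) [Field E] [Algebra F E]
    (b c : F) (hnt : ¬(b = 0 ∧ c = 0)) :
    ∀ v : Fin 3 → E, v ≠ 0 →
      (((∃ l : E, ((tau q b c).map (algebraMap F E)).mulVec v = l • v) ∧
          v 1 ^ (q + 1) = v 0 ^ q * v 2 + v 0 * v 2 ^ q) ↔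
        (v 1 = 0 ∧ v 2 = 0)) := by
  intro v _
  have hq0 : q ≠ 0 := hq ▸ pow_ne_zero n hp.ne_zero
  have hnt' : ¬(algebraMap F E b = 0 ∧ algebraMap F E c = 0) := by simpa using hnt
  rw [tau_map]
  constructor
  · rintro ⟨⟨l, hl⟩, hcurve⟩
    have h2 := eq_zero_of_tau_mulVec_eq_smul hq0 hnt' hl
    exact ⟨(normTrace_eq_iff_of_eq_zero hq0 h2).mp hcurve, h2⟩
  · rintro ⟨h1, h2⟩
    exact ⟨⟨1, by rw [one_smul]; exact tau_mulVec_of_eq_zero h1 h2⟩,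
      (normTrace_eq_iff_of_eq_zero hq0 h2).mpr h1⟩

/-- Let `q = p ^ n`, `F` be a finite field with `q²` elements, and `E` any
field extension of `F`. Every nontrivial element `τ = τ_{1,b,c}` of `S` fixes exactly one point
of `PG(2, E)` lying on the norm-trace model `y^(q+1) = x^q t + x t^q` of the Hermitian curve,
namely the point `[1 : 0 : 0]`: a nonzero vector `v ∈ E³` satisfying the curve equation is an
eigenvector of `τ` if and only if `v 1 = 0` and `v 2 = 0`, i.e. `v` is a scalar multiple of
`(1, 0, 0)`. -/
theorem tau_fixes_exactly_one_point_of_curve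
    (p n q : ℕ) (hp : p.Prime) (hn : 1 ≤ n) (hq : q = p ^ n)
    (F : Type) [Field F] [Fintype F] (hF : Fintype.card F = q ^ 2)
    (E : Type) [Field E] [Algebra F E]
    (b c : F) (hbc : b ^ (q + 1) = c ^ q + c) (hnt : ¬(b = 0 ∧ c = 0)) :
    ∀ v : Fin 3 → E, v ≠ 0 →
      (((∃ l : E, ((tau q b c).map (algebraMap F E)).mulVec v = l • v) ∧
          v 1 ^ (q + 1) = v 0 ^ q * v 2 + v 0 * v 2 ^ q) ↔
        (v 1 = 0 ∧ v 2 = 0)) :=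
  tau_fixes_exactly_one_point_of_curve_general p n q hp hq F E b c hnt
end
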